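/- Let γ_A, γ_B ∈ (0,1) and define, for integers k ≥ 1, η(k) := Σ_{x=0}^{k} C(k,x)(2/3)^x(1/3)^{k−x} [Σ_{y=0}^x p*(x,y)(1/2)^{k−x+y}(1−γ_B)^{max(k−x+y−1,0)}], where p*(x,y) is the surrogate distribution. Then η(k) = c₁t₁^k + c₂t₂^k − c₃t₃^k − c₄t₄^k, with c₁ = 8/(3−γ_B)², c₂ = (1+γ_B)²/((1−γ_A)(1−γ_B)(3−γ_B)²), c₃ = γ_A(1+γ_B)²/((1−γ_A)(1−γ_B)(3−γ_B)²), c₄ = γ_B/((1−γ_A)(1−γ_B)), t₁ = (2−γ_B)/3, t₂ = (4−3γ_A−2γ_B+γ_Aγ_B)/6, t₃ = (1−γ_B)/6, t₄ = (1−γ_A)/3. -/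

import Mathlib

/-!
Write `a = 1 - γA`, `b = 1 - γB`. The only obstructions to a closed form are the two truncated
exponents: `b ^ (n - 1) * b = b ^ n - γB·[n = 0]` and `a ^ (x - 1) * a = a ^ x - γA·[x = 0]`.
Away from these corrections everything is the binomial theorem. The generating function of
`p*(x, ·)` at `s` is `α_x ((1 + s)/2)^x + (1 - α_x) s ((1 + s)/2)^(x-2)`; at `s = b/2` this is a
combination of `u^x` and `α_x u^x` with `u = (3 - γB)/4`, and the binomial sum over `x` of these
two produces `t₁^k` and `t₂^k`. The correction at `x = 0` in `α_x` produces `t₃^k`, and the one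
at `n = k - x + y = 0`, i.e. `x = k, y = 0`, produces `t₄^k`.
-/

/-- The surrogate distribution `p*(x,y)` with `α_x = (1-γA)^{max(x-1,0)}` and the
convention `C(n,k) = 0` for `k < 0`. -/
noncomputable def pstar (γA : ℝ) (x y : ℕ) : ℝ :=
  (1 - γA) ^ (x - 1) * (x.choose y : ℝ) * (1 / 2 : ℝ) ^ x +
    (1 - (1 - γA) ^ (x - 1)) *
      (if y = 0 then 0 else ((x - 2).choose (y - 1) : ℝ)) * (1 / 2 : ℝ) ^ (x - 2)

open Finset

theorem pow_sub_one_mul_eq_pow_add_ite {R : Type*} [Ring R] (b : R) (n : ℕ) :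
    b ^ (n - 1) * b = b ^ n + if n = 0 then b - 1 else 0 := by
  rcases n with _ | n <;> simp [pow_succ]

theorem mul_sum_choose_mul_pow_pred {R : Type*} [CommRing R] (a p q : R) (n : ℕ) :
    a * ∑ x ∈ range (n + 1), (n.choose x : R) * a ^ (x - 1) * p ^ x * q ^ (n - x)
      = (a * p + q) ^ n + (a - 1) * q ^ n := by
  have hterm : ∀ x ∈ range (n + 1), a * ((n.choose x : R) * a ^ (x - 1) * p ^ x * q ^ (n - x))
      = (a * p) ^ x * q ^ (n - x) * n.choose x + if x = 0 then (a - 1) * q ^ n else 0 := by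
    intro x _
    have h := pow_sub_one_mul_eq_pow_add_ite a x
    split_ifs at h ⊢ with hx
    · subst hx; simp; ring
    · rw [add_zero] at h
      rw [add_zero, mul_pow, ← h]; ring
  rw [mul_sum, sum_congr rfl hterm, sum_add_distrib, ← add_pow, sum_ite_eq' (range (n + 1)) 0,
    if_pos (mem_range.2 n.succ_pos)]

theorem sum_ite_choose_pred_mul_pow {R : Type*} [CommSemiring R] (s : R) (n : ℕ) :
    ∑ y ∈ range (n + 3), (if y = 0 then 0 else (n.choose (y - 1) : R)) * s ^ y
      = s * (s + 1) ^ n := by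
  rw [sum_range_succ', sum_range_succ, add_pow, mul_sum]
  simp [Nat.choose_succ_self, pow_succ]
  exact sum_congr rfl fun y _ => by ring

theorem one_sub_pow_pred_mul_pow_sub_two_mul_sq {R : Type*} [Ring R] (a u : R) (x : ℕ) :
    (1 - a ^ (x - 1)) * u ^ (x - 2) * u ^ 2 = (1 - a ^ (x - 1)) * u ^ x := by
  rcases x with _ | _ | x <;> simp [mul_assoc, ← pow_add]

theorem sum_pstar_mul_pow (γA s : ℝ) (x : ℕ) :
    ∑ y ∈ range (x + 1), pstar γA x y * s ^ y
      = (1 - γA) ^ (x - 1) * ((s + 1) / 2) ^ x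
        + (1 - (1 - γA) ^ (x - 1)) * s * ((s + 1) / 2) ^ (x - 2) := by
  obtain _ | _ | n := x
  · simp [pstar]
  · simp [pstar, sum_range_succ]; ring
  · have hbinom : ∑ y ∈ range (n + 3), ((n + 2).choose y : ℝ) * s ^ y = (s + 1) ^ (n + 2) := by
      rw [add_pow]; exact sum_congr rfl fun y _ => by simp; ring
    have hsplit : ∀ y ∈ range (n + 3), pstar γA (n + 2) y * s ^ y
        = (1 - γA) ^ (n + 1) * (1 / 2) ^ (n + 2) * (((n + 2).choose y : ℝ) * s ^ y)
          + (1 - (1 - γA) ^ (n + 1)) * (1 / 2) ^ n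
            * ((if y = 0 then 0 else (n.choose (y - 1) : ℝ)) * s ^ y) := by
      intro y _
      simp only [pstar, show n + 2 - 1 = n + 1 from rfl, Nat.add_sub_cancel]
      ring
    rw [sum_congr rfl hsplit, sum_add_distrib, ← mul_sum, ← mul_sum, hbinom,
      sum_ite_choose_pred_mul_pow, show n + 1 + 1 - 1 = n + 1 from rfl,
      show n + 1 + 1 - 2 = n from rfl]
    simp only [div_pow]
    ring

theorem mul_sum_pstar_mul_half_pow_mul_pow_pred (γA b : ℝ) (x d : ℕ) :
    b * ∑ y ∈ range (x + 1), pstar γA x y * (1 / 2) ^ (d + y) * b ^ (d + y - 1)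
      = (b / 2) ^ d * ∑ y ∈ range (x + 1), pstar γA x y * (b / 2) ^ y
        + if d = 0 then (b - 1) * (1 - γA) ^ (x - 1) * (1 / 2) ^ x else 0 := by
  have hterm : ∀ y ∈ range (x + 1), b * (pstar γA x y * (1 / 2) ^ (d + y) * b ^ (d + y - 1))
      = (b / 2) ^ d * (pstar γA x y * (b / 2) ^ y)
        + if d + y = 0 then (b - 1) * pstar γA x y else 0 := by
    intro y _
    rw [mul_left_comm, mul_comm b, mul_assoc, pow_sub_one_mul_eq_pow_add_ite]
    split_ifs with h
    · obtain ⟨rfl, rfl⟩ := Nat.add_eq_zero_iff.1 h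
      simp; ring
    · simp only [div_pow, pow_add]; ring
  rw [mul_sum, sum_congr rfl hterm, sum_add_distrib, ← mul_sum]
  rcases d with _ | d
  · simp [pstar]; ring
  · simp

theorem mul_choose_mul_sum_pstar_eq (γA γB : ℝ) {k x : ℕ} (hx : x ≤ k) :
    (1 - γB) * (3 - γB) ^ 2 * ((k.choose x : ℝ) * (2 / 3) ^ x * (1 / 3) ^ (k - x) *
      ∑ y ∈ range (x + 1), pstar γA x y * (1 / 2) ^ (k - x + y) * (1 - γB) ^ (k - x + y - 1))
    = (1 + γB) ^ 2 * ((k.choose x : ℝ) * (1 - γA) ^ (x - 1) * ((3 - γB) / 6) ^ x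
          * ((1 - γB) / 6) ^ (k - x))
      + 8 * (1 - γB) * ((k.choose x : ℝ) * ((3 - γB) / 6) ^ x * ((1 - γB) / 6) ^ (k - x))
      - if x = k then γB * (3 - γB) ^ 2 * (1 - γA) ^ (k - 1) * (1 / 3) ^ k else 0 := by
  have hinner := mul_sum_pstar_mul_half_pow_mul_pow_pred γA (1 - γB) x (k - x)
  rw [sum_pstar_mul_pow, show ((1 - γB) / 2 + 1) / 2 = (3 - γB) / 4 by ring] at hinner
  simp only [Nat.sub_eq_zero_iff_le, hx.ge_iff_eq] at hinner
  have hshift := one_sub_pow_pred_mul_pow_sub_two_mul_sq (1 - γA) ((3 - γB) / 4) x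
  have hp : ((3 - γB) / 6) ^ x = (2 / 3) ^ x * ((3 - γB) / 4) ^ x := by rw [← mul_pow]; ring_nf
  have hq : ((1 - γB) / 6) ^ (k - x) = (1 / 3) ^ (k - x) * ((1 - γB) / 2) ^ (k - x) := by
    rw [← mul_pow]; ring_nf
  have hcorr : (3 - γB) ^ 2 * ((k.choose x : ℝ) * (2 / 3) ^ x * (1 / 3) ^ (k - x))
      * (if x = k then (1 - γB - 1) * (1 - γA) ^ (x - 1) * (1 / 2) ^ x else 0)
      = -if x = k then γB * (3 - γB) ^ 2 * (1 - γA) ^ (k - 1) * (1 / 3) ^ k else 0 := by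
    split_ifs with hxk
    · subst hxk
      rw [Nat.choose_self, Nat.sub_self, show ((1 : ℝ) / 3) ^ x = (2 / 3) ^ x * (1 / 2) ^ x by
        rw [← mul_pow]; norm_num]
      ring
    · simp
  rw [hp, hq]
  linear_combination (3 - γB) ^ 2 * ((k.choose x : ℝ) * (2 / 3) ^ x * (1 / 3) ^ (k - x)) * hinner
    + 16 * ((k.choose x : ℝ) * (2 / 3) ^ x * (1 / 3) ^ (k - x)) * ((1 - γB) / 2) ^ (k - x)
      * ((1 - γB) / 2) * hshift
    + hcorr

theorem stmt_12 (γA γB : ℝ) (hA1 : γA < 1) (hB1 : γB < 1)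
    (k : ℕ) (hk : 1 ≤ k) :
    ∑ x ∈ Finset.range (k + 1),
      (k.choose x : ℝ) * (2 / 3 : ℝ) ^ x * (1 / 3 : ℝ) ^ (k - x) *
        (∑ y ∈ Finset.range (x + 1),
          pstar γA x y * (1 / 2 : ℝ) ^ (k - x + y) * (1 - γB) ^ (k - x + y - 1))
    = (8 / (3 - γB) ^ 2) * ((2 - γB) / 3) ^ k +
      ((1 + γB) ^ 2 / ((1 - γA) * (1 - γB) * (3 - γB) ^ 2)) *
        ((4 - 3 * γA - 2 * γB + γA * γB) / 6) ^ k -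
      (γA * (1 + γB) ^ 2 / ((1 - γA) * (1 - γB) * (3 - γB) ^ 2)) * ((1 - γB) / 6) ^ k -
      (γB / ((1 - γA) * (1 - γB))) * ((1 - γA) / 3) ^ k := by
  have ha : 1 - γA ≠ 0 := sub_ne_zero.2 hA1.ne'
  have hb : 1 - γB ≠ 0 := sub_ne_zero.2 hB1.ne'
  have hb3 : 3 - γB ≠ 0 := by linarith
  have hS1 := mul_sum_choose_mul_pow_pred (1 - γA) ((3 - γB) / 6) ((1 - γB) / 6) k
  have hS2 : ∑ x ∈ range (k + 1), (k.choose x : ℝ) * ((3 - γB) / 6) ^ x * ((1 - γB) / 6) ^ (k - x)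
      = ((2 - γB) / 3) ^ k := by
    rw [show (2 - γB) / 3 = (3 - γB) / 6 + (1 - γB) / 6 by ring, add_pow]
    exact sum_congr rfl fun x _ => by ring
  have hpow : (1 - γA) ^ (k - 1) * (1 - γA) = (1 - γA) ^ k := pow_sub_one_mul (by omega) _
  rw [← mul_right_inj' (mul_ne_zero hb (pow_ne_zero 2 hb3)), mul_sum,
    sum_congr rfl fun x hx => mul_choose_mul_sum_pstar_eq γA γB (mem_range_succ_iff.1 hx),
    sum_sub_distrib, sum_add_distrib, ← mul_sum, ← mul_sum, sum_ite_eq' (range (k + 1)) k,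
    if_pos (self_mem_range_succ k), hS2]
  rw [show (4 - 3 * γA - 2 * γB + γA * γB) / 6 = (1 - γA) * ((3 - γB) / 6) + (1 - γB) / 6 by ring,
    show (1 - γA) / 3 = (1 - γA) * (1 / 3) by ring, mul_pow, ← hpow]
  field_simp
  linear_combination (1 + γB) ^ 2 * hS1
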